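/- arXiv:2003.13067 — 3 statements merged into one kernel-verified Lean document; each statement's English description precedes it below -/
import Mathlib

section
/- The function J attains its maximum over (-∞, c_N] at some point c'' ∈ (θ'_N, c_N]; in particular the maximum exists and no maximizer lies in (-∞, θ'_N]. -/
/-!
For `s ≤ θ'_N`, the average of `V` is at most `Z + G(0)` and `G` is increasing, so
`J s ≤ G(θ'_N) + γ (Z + G 0) = G(c_N) + γ Z - (1 - γ) G 0`. At `c_N` the average of `V` is at
least `Z` (as `V` is antitone on `[c_N, ∞)` and equals `Z` far out), so `J c_N ≥ G(c_N) + γ Z`.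
Hence `J < J c_N` on `(-∞, θ'_N]`, and a maximizer of the continuous `J` on `[θ'_N, c_N]`
maximizes it on all of `(-∞, c_N]`.
-/

open MeasureTheory Set Filter Bornology

section WeightedAverage

variable {α : Type*} [MeasurableSpace α] {μ : Measure α} {S : Set α} {f g : α → ℝ}
  {K : ℝ}

lemma setIntegral_mul_le_of_le (hS : MeasurableSet S) (hf1 : ∫ x in S, f x ∂μ = 1)
    (hfnn : ∀ x ∈ S, 0 ≤ f x) (hfg : IntegrableOn (fun x => f x * g x) S μ)
    (hg : ∀ x ∈ S, g x ≤ K) : ∫ x in S, f x * g x ∂μ ≤ K := by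
  have hf : IntegrableOn f S μ := integrable_of_integral_eq_one hf1
  calc ∫ x in S, f x * g x ∂μ ≤ ∫ x in S, f x * K ∂μ :=
        setIntegral_mono_on hfg (hf.mul_const K) hS
          fun x hx => mul_le_mul_of_nonneg_left (hg x hx) (hfnn x hx)
    _ = K := by rw [integral_mul_const, hf1, one_mul]

lemma le_setIntegral_mul_of_le (hS : MeasurableSet S) (hf1 : ∫ x in S, f x ∂μ = 1)
    (hfnn : ∀ x ∈ S, 0 ≤ f x) (hfg : IntegrableOn (fun x => f x * g x) S μ)
    (hg : ∀ x ∈ S, K ≤ g x) : K ≤ ∫ x in S, f x * g x ∂μ := by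
  have hf : IntegrableOn f S μ := integrable_of_integral_eq_one hf1
  calc K = ∫ x in S, f x * K ∂μ := by rw [integral_mul_const, hf1, one_mul]
    _ ≤ ∫ x in S, f x * g x ∂μ :=
        setIntegral_mono_on (hf.mul_const K) hfg hS
          fun x hx => mul_le_mul_of_nonneg_left (hg x hx) (hfnn x hx)

end WeightedAverage

section ShiftedAverage

variable {f V : ℝ → ℝ}

lemma integrableOn_Ioi_mul_comp_const_add (hf : IntegrableOn f (Ioi 0)) (hV : Continuous V)
    {s : ℝ} (hVb : IsBounded (V '' Ici s)) :
    IntegrableOn (fun x => f x * V (s + x)) (Ioi 0) := by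
  obtain ⟨C, hC⟩ := hVb.exists_norm_le
  refine hf.mul_bdd (c := C) (hV.comp (continuous_const_add s)).aestronglyMeasurable ?_
  filter_upwards [ae_restrict_mem measurableSet_Ioi] with x hx
  exact hC _ (mem_image_of_mem V (mem_Ici.2 (le_add_of_nonneg_right (le_of_lt hx))))

lemma continuous_setIntegral_Ioi_mul_comp_const_add (hf : IntegrableOn f (Ioi 0))
    (hV : Continuous V) (hVb : ∀ r, IsBounded (V '' Ici r)) :
    Continuous fun s => ∫ x in Ioi 0, f x * V (s + x) := by
  refine continuous_iff_continuousAt.2 fun s₀ => ?_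
  obtain ⟨C, hC⟩ := (hVb (s₀ - 1)).exists_norm_le
  have hC' : ∀ y ∈ Ici (s₀ - 1), ‖V y‖ ≤ C := fun y hy => hC _ (mem_image_of_mem V hy)
  refine continuousAt_of_dominated (bound := fun x => ‖f x‖ * C) ?_ ?_ (hf.norm.mul_const C)
    (ae_of_all _ fun x =>
      (continuous_const.mul (hV.comp (continuous_add_const x))).continuousAt)
  · filter_upwards [Ioi_mem_nhds (sub_one_lt s₀)] with s hs
    exact (integrableOn_Ioi_mul_comp_const_add hf hV ((hVb _).subset
      (image_mono (Ici_subset_Ici.2 (le_of_lt hs))))).aestronglyMeasurable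
  · filter_upwards [Ioi_mem_nhds (sub_one_lt s₀)] with s hs
    filter_upwards [ae_restrict_mem measurableSet_Ioi] with x hx
    rw [norm_mul]
    exact mul_le_mul_of_nonneg_left
      (hC' _ (by simp only [mem_Ici]; linarith [mem_Ioi.1 hs, mem_Ioi.1 hx])) (norm_nonneg _)

end ShiftedAverage

lemma exists_mem_Ioc_forall_le_of_lt_right {J : ℝ → ℝ} {a b : ℝ} (hab : a ≤ b)
    (hJ : ContinuousOn J (Icc a b)) (hlt : ∀ s ≤ a, J s < J b) :
    ∃ c ∈ Ioc a b, (∀ s ∈ Iic b, J s ≤ J c) ∧ (∀ s ∈ Iic a, J s < J c) := by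
  obtain ⟨c, hc, hmax⟩ := isCompact_Icc.exists_isMaxOn (nonempty_Icc.2 hab) hJ
  have hgt : ∀ s ∈ Iic a, J s < J c := fun s hs => (hlt s hs).trans_le (hmax ⟨hab, le_rfl⟩)
  refine ⟨c, ⟨lt_of_not_ge fun h => (hgt c h).false, hc.2⟩, fun s hs => ?_, hgt⟩
  rcases le_or_gt s a with h | h
  · exact (hgt s h).le
  · exact hmax ⟨h.le, hs⟩

theorem stmt_7_general
    (cN t₀ : ℝ) (G : ℝ → ℝ)
    (hcN : cN < 0) (ht₀ : 0 < t₀)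
    (hGcont : ContinuousOn G (Iio t₀))
    (hGinc : StrictMonoOn G (Iic cN))
    (hG0 : 0 < G 0)
    (θN' : ℝ) (hθN' : θN' < cN) (hGθN' : G θN' = G cN - G 0)
    (f : ℝ → ℝ) (γ : ℝ)
    (hfnn : ∀ x, 0 ≤ f x)
    (hf1 : (∫ x in Ioi (0:ℝ), f x) = 1) (hγ : γ ∈ Ioo (0:ℝ) 1)
    (Z θ : ℝ)
    (V : ℝ → ℝ) (hVcont : Continuous V)
    (hVub : ∀ y, V y ≤ Z + G 0)
    (hVlb : ∀ r : ℝ, BddBelow (V '' Ici r))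
    (hVanti : AntitoneOn V (Ici cN))
    (hVZ : ∀ y, θ ≤ y → V y = Z)
    (J : ℝ → ℝ) (hJ : ∀ s, J s = G s + γ * ∫ x in Ioi (0:ℝ), f x * V (s + x)) :
    ∃ c'' ∈ Ioc θN' cN,
      (∀ s ∈ Iic cN, J s ≤ J c'') ∧
      (∀ s ∈ Iic θN', J s < J c'') := by
  obtain ⟨hγ0, hγ1⟩ := hγ
  have hf : IntegrableOn f (Ioi 0) := integrable_of_integral_eq_one hf1
  have hVb : ∀ r, IsBounded (V '' Ici r) := fun r =>
    isBounded_iff_bddBelow_bddAbove.2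
      ⟨hVlb r, ⟨Z + G 0, by rintro _ ⟨y, -, rfl⟩; exact hVub y⟩⟩
  have hint : ∀ s, IntegrableOn (fun x => f x * V (s + x)) (Ioi 0) := fun s =>
    integrableOn_Ioi_mul_comp_const_add hf hVcont (hVb s)
  have hVge : ∀ y, cN ≤ y → Z ≤ V y := fun y hy =>
    (hVZ _ (le_max_right y θ)).symm.le.trans
      (hVanti hy (hy.trans (le_max_left y θ)) (le_max_left y θ))
  have hJ_le : ∀ s, J s ≤ G s + γ * (Z + G 0) := fun s => by
    rw [hJ s]
    gcongr
    exact setIntegral_mul_le_of_le measurableSet_Ioi hf1 (fun x _ => hfnn x) (hint s)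
      fun x _ => hVub _
  have hJcN : G cN + γ * Z ≤ J cN := by
    rw [hJ cN]
    gcongr
    exact le_setIntegral_mul_of_le measurableSet_Ioi hf1 (fun x _ => hfnn x) (hint cN)
      fun x hx => hVge _ (le_add_of_nonneg_right (le_of_lt hx))
  have hJcont : ContinuousOn J (Icc θN' cN) := by
    refine ContinuousOn.congr ?_ fun s _ => hJ s
    exact (hGcont.mono fun x hx => hx.2.trans_lt (hcN.trans ht₀)).add
      (continuous_const.mul
        (continuous_setIntegral_Ioi_mul_comp_const_add hf hVcont hVb)).continuousOn
  refine exists_mem_Ioc_forall_le_of_lt_right hθN'.le hJcont fun s hs => ?_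
  have hGs : G s ≤ G θN' := hGinc.monotoneOn (hs.trans hθN'.le) hθN'.le hs
  have hγG : γ * G 0 < G 0 := mul_lt_of_lt_one_left hG0 hγ1
  linarith [hJ_le s]

theorem stmt_7
    (cN t₀ : ℝ) (G : ℝ → ℝ)
    (hcN : cN < 0) (ht₀ : 0 < t₀)
    (hGcont : ContinuousOn G (Iio t₀))
    (hGinc : StrictMonoOn G (Iic cN))
    (hGdec : StrictAntiOn G (Ico cN t₀))
    (hGtop : Tendsto G (nhdsWithin t₀ (Iio t₀)) atBot)
    (hGbot : Tendsto G atBot atBot)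
    (hG0 : 0 < G 0)
    (θN : ℝ) (hθN : θN ∈ Ioo cN t₀) (hGθN : G θN = G cN - G 0)
    (θN' : ℝ) (hθN' : θN' < cN) (hGθN' : G θN' = G cN - G 0)
    (f : ℝ → ℝ) (γ : ℝ)
    (hfm : Measurable f) (hf0 : ∀ x ≤ 0, f x = 0) (hfnn : ∀ x, 0 ≤ f x)
    (hf1 : (∫ x in Ioi (0:ℝ), f x) = 1) (hγ : γ ∈ Ioo (0:ℝ) 1)
    (hfpos : ∀ᵐ x ∂volume, 0 < x → 0 < f x)
    (Z θ : ℝ) (hθ : θ ∈ Ioc cN θN)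
    (V : ℝ → ℝ) (hVcont : Continuous V)
    (hVub : ∀ y, V y ≤ Z + G 0)
    (hVlb : ∀ r : ℝ, BddBelow (V '' Ici r))
    (hVanti : AntitoneOn V (Ici cN))
    (hVZ : ∀ y, θ ≤ y → V y = Z)
    (hVgt : ∀ y, cN ≤ y → y < θ → Z < V y)
    (c' : ℝ) (hc' : c' ∈ Ioc θN' cN) (hVc' : V c' = Z + G 0)
    (J : ℝ → ℝ) (hJ : ∀ s, J s = G s + γ * ∫ x in Ioi (0:ℝ), f x * V (s + x)) :
    ∃ c'' ∈ Ioc θN' cN,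
      (∀ s ∈ Iic cN, J s ≤ J c'') ∧
      (∀ s ∈ Iic θN', J s < J c'') :=
  stmt_7_general cN t₀ G hcN ht₀ hGcont hGinc hG0 θN' hθN' hGθN' f γ hfnn hf1 hγ Z θ V hVcont hVub
    hVlb hVanti hVZ J hJ
end

section
/- Let V : ℝ → ℝ be measurable, bounded above, and satisfy V(y) − V(x) ≥ −G(0) whenever x < y. Then for every state s < c_N and every non-merging action a < s: Q_V(s, s) − Q_V(s, a) ≥ G(s) − H(a) − γ G(0) > (1 − γ) G(0) > 0. -/
/-! Since `V` drops by at most `G 0` along any increasing step, `V (a + x) - V (s + x) ≤ G 0`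
pointwise, so averaging against the probability density `f` bounds the gap in continuation
values by `γ G(0)`. The remaining margin comes from `G a < G s`, as `G` increases on `(-∞, c_N]`. -/

open MeasureTheory Set Filter

section

variable {α : Type*} [MeasurableSpace α] {μ : Measure α}

theorem MeasureTheory.Integrable.mul_of_le_of_le {f g : α → ℝ} {m M : ℝ} (hf : Integrable f μ)
    (hg : AEStronglyMeasurable g μ) (hlo : ∀ᵐ x ∂μ, m ≤ g x) (hhi : ∀ᵐ x ∂μ, g x ≤ M) :
    Integrable (fun x => f x * g x) μ :=
  hf.mul_bdd hg (c := max |m| |M|) <| by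
    filter_upwards [hlo, hhi] with x hxm hxM
    exact abs_le_max_abs_abs hxm hxM

theorem integral_mul_sub_integral_mul_le {f g h : α → ℝ} {D : ℝ} (hf : Integrable f μ)
    (hfg : Integrable (fun x => f x * g x) μ) (hfh : Integrable (fun x => f x * h x) μ)
    (hf0 : ∀ x, 0 ≤ f x) (hgh : ∀ x, g x - h x ≤ D) :
    ∫ x, f x * g x ∂μ - ∫ x, f x * h x ∂μ ≤ D * ∫ x, f x ∂μ := by
  rw [← integral_sub hfg hfh, ← integral_const_mul]
  refine integral_mono (hfg.sub hfh) (hf.const_mul D) fun x => ?_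
  have : f x * g x - f x * h x = f x * (g x - h x) := by ring
  simpa only [Pi.sub_apply, this, mul_comm D] using mul_le_mul_of_nonneg_left (hgh x) (hf0 x)

end

theorem integrableOn_mul_comp_const_add {f V : ℝ → ℝ} {D : ℝ} (hf : IntegrableOn f (Ioi 0))
    (hVm : Measurable V) (hVub : BddAbove (range V)) (hVdrop : ∀ x y, x < y → -D ≤ V y - V x)
    (c : ℝ) : IntegrableOn (fun x => f x * V (c + x)) (Ioi 0) := by
  obtain ⟨M, hM⟩ := hVub
  refine hf.mul_of_le_of_le (m := V c - D) (M := M)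
    (hVm.comp (measurable_const_add c)).aestronglyMeasurable ?_
    (ae_of_all _ fun x => hM (mem_range_self _))
  filter_upwards [ae_restrict_mem measurableSet_Ioi] with x (hx : 0 < x)
  linarith [hVdrop c (c + x) (by linarith)]

theorem stmt_14_general
    (cN : ℝ) (G : ℝ → ℝ)
    (hGinc : StrictMonoOn G (Iic cN))
    (hG0 : 0 < G 0)
    (f : ℝ → ℝ) (γ : ℝ)
    (hfnn : ∀ x, 0 ≤ f x)
    (hf1 : (∫ x in Ioi (0:ℝ), f x) = 1) (hγ : γ ∈ Ioo (0:ℝ) 1)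
    (V : ℝ → ℝ) (hVm : Measurable V)
    (hVub : BddAbove (range V))
    (hVdiff : ∀ x y : ℝ, x < y → -G 0 ≤ V y - V x) :
    ∀ s, s < cN → ∀ a, a < s →
      (G s - (G a - G 0) - γ * G 0 ≤
        (G s + γ * ∫ x in Ioi (0:ℝ), f x * V (s + x)) -
          ((G a - G 0) + γ * ∫ x in Ioi (0:ℝ), f x * V (a + x))) ∧
      (1 - γ) * G 0 < G s - (G a - G 0) - γ * G 0 ∧
      0 < (1 - γ) * G 0 := by
  intro s hs a ha
  obtain ⟨hγ0, hγ1⟩ := hγ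
  have hf : IntegrableOn f (Ioi 0) := Integrable.of_integral_ne_zero (by simp [hf1])
  have hint := integrableOn_mul_comp_const_add hf hVm hVub hVdiff
  have hdrop :
      (∫ x in Ioi (0:ℝ), f x * V (a + x)) - ∫ x in Ioi (0:ℝ), f x * V (s + x) ≤ G 0 := by
    simpa only [hf1, mul_one] using integral_mul_sub_integral_mul_le hf (hint a) (hint s) hfnn
      fun x => by linarith [hVdiff (a + x) (s + x) (by linarith)]
  have hGas : G a < G s := hGinc (mem_Iic.mpr (ha.trans hs).le) (mem_Iic.mpr hs.le) ha
  exact ⟨by nlinarith, by linarith, by nlinarith⟩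

theorem stmt_14
    (cN t₀ : ℝ) (G : ℝ → ℝ)
    (hcN : cN < 0) (ht₀ : 0 < t₀)
    (hGcont : ContinuousOn G (Iio t₀))
    (hGinc : StrictMonoOn G (Iic cN))
    (hGdec : StrictAntiOn G (Ico cN t₀))
    (hGtop : Tendsto G (nhdsWithin t₀ (Iio t₀)) atBot)
    (hGbot : Tendsto G atBot atBot)
    (hG0 : 0 < G 0)
    (f : ℝ → ℝ) (γ : ℝ)
    (hfm : Measurable f) (hf0 : ∀ x ≤ 0, f x = 0) (hfnn : ∀ x, 0 ≤ f x)
    (hf1 : (∫ x in Ioi (0:ℝ), f x) = 1) (hγ : γ ∈ Ioo (0:ℝ) 1)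
    (V : ℝ → ℝ) (hVm : Measurable V)
    (hVub : BddAbove (range V))
    (hVdiff : ∀ x y : ℝ, x < y → -G 0 ≤ V y - V x) :
    ∀ s, s < cN → ∀ a, a < s →
      (G s - (G a - G 0) - γ * G 0 ≤
        (G s + γ * ∫ x in Ioi (0:ℝ), f x * V (s + x)) -
          ((G a - G 0) + γ * ∫ x in Ioi (0:ℝ), f x * V (a + x))) ∧
      (1 - γ) * G 0 < G s - (G a - G 0) - γ * G 0 ∧
      0 < (1 - γ) * G 0 :=
  stmt_14_general cN G hGinc hG0 f γ hfnn hf1 hγ V hVm hVub hVdiff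
end

section
/- Let V be a Bellman fixed point that is continuous and antitone on [c_N, ∞), and assume f > 0 almost everywhere on (0, ∞). Then the optimal stationary policy is threshold-based: there exist a threshold θ ∈ [c_N, θ_N] and a constant time reduction c ∈ [θ'_N, c_N] such that for every s ≤ θ the merging action attains the supremum, V(s) = Q_V(s, s), and for every s > θ the non-merging action c attains the supremum, V(s) = Q_V(s, c). Moreover, setting Z := V(θ), the optimal value function satisfies V(s) = Z for all s > θ and V(s) = G(s) + γ ∫₀^∞ f(x) V(s + x) dx for all s ≤ θ. -/
open MeasureTheory Set Filter

/-!
Write `W a = ∫ f(x) V(a + x) dx`, `R a = H a + γ W a` for the value of the non-merging action `a`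
and `Q s = G s + γ W s = R s + G 0` for the value of merging. The fixed-point equation gives
`V u ≤ V v + G 0` for `u ≤ v`, hence `W u ≤ W v + G 0`; with the antitonicity of `W` on `[c_N, ∞)`
and the unimodality of `G`, this shows that `sup_{a < t₀} R a` is attained at some
`c ∈ [θ'_N, c_N]`. `Q` is antitone on `[c_N, t₀)` with `Q θ_N ≤ R c ≤ Q c_N`, so `Q θ = R c` for
some `θ ∈ [c_N, θ_N]` by the intermediate value theorem: below `θ` merging beats every
non-merging action, above `θ` the action `c` is optimal.
-/

theorem integral_mul_le_integral_mul_add {α : Type*} [MeasurableSpace α] {μ : Measure α}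
    {f g₁ g₂ : α → ℝ} {C : ℝ} (hf : ∀ᵐ x ∂μ, 0 ≤ f x) (hf1 : ∫ x, f x ∂μ = 1)
    (h₁ : Integrable (fun x => f x * g₁ x) μ) (h₂ : Integrable (fun x => f x * g₂ x) μ)
    (h : ∀ᵐ x ∂μ, g₁ x ≤ g₂ x + C) :
    ∫ x, f x * g₁ x ∂μ ≤ ∫ x, f x * g₂ x ∂μ + C := by
  have hfi : Integrable f μ := Integrable.of_integral_ne_zero (by rw [hf1]; exact one_ne_zero)
  calc ∫ x, f x * g₁ x ∂μ ≤ ∫ x, (f x * g₂ x + f x * C) ∂μ := by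
        refine integral_mono_ae h₁ (h₂.add (hfi.mul_const C)) ?_
        filter_upwards [hf, h] with x hfx hx
        rw [← mul_add]
        exact mul_le_mul_of_nonneg_left hx hfx
    _ = ∫ x, f x * g₂ x ∂μ + C := by
        rw [integral_add h₂ (hfi.mul_const C), integral_mul_const, hf1, one_mul]

theorem exists_isGreatest_image_of_isCompact {α β : Type*} [TopologicalSpace α] [LinearOrder β]
    [TopologicalSpace β] [ClosedIciTopology β] {φ : α → β} {s K : Set α} (hK : IsCompact K)
    (hKne : K.Nonempty) (hKs : K ⊆ s) (hφ : ContinuousOn φ K)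
    (hle : ∀ a ∈ s, ∃ b ∈ K, φ a ≤ φ b) : ∃ c ∈ K, IsGreatest (φ '' s) (φ c) := by
  obtain ⟨c, hc, hmax⟩ := hK.exists_isMaxOn hKne hφ
  refine ⟨c, hc, mem_image_of_mem φ (hKs hc), ?_⟩
  rintro _ ⟨a, ha, rfl⟩
  obtain ⟨b, hb, hab⟩ := hle a ha
  exact hab.trans (hmax hb)

theorem apply_le_of_monotoneOn_of_antitoneOn {G : ℝ → ℝ} {c t a : ℝ}
    (hinc : MonotoneOn G (Iic c)) (hdec : AntitoneOn G (Ico c t)) (ha : a < t) : G a ≤ G c := by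
  rcases le_or_gt a c with h | h
  · exact hinc h (mem_Iic.2 le_rfl) h
  · exact hdec (left_mem_Ico.2 (h.trans ha)) ⟨h.le, ha⟩ h.le

noncomputable section

def shiftedMean (f V : ℝ → ℝ) (a : ℝ) : ℝ := ∫ x in Ioi (0 : ℝ), f x * V (a + x)

section ShiftedMean

variable {f V : ℝ → ℝ}

theorem exists_norm_le_on_Ici {r : ℝ} (hVub : BddAbove (range V)) (hVlb : BddBelow (V '' Ici r)) :
    ∃ K, ∀ t ∈ Ici r, ‖V t‖ ≤ K := by
  obtain ⟨K, hK⟩ := (isBounded_iff_bddBelow_bddAbove.2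
    ⟨hVlb, hVub.mono (image_subset_range _ _)⟩).exists_norm_le
  exact ⟨K, fun t ht => hK _ (mem_image_of_mem V ht)⟩

theorem integrableOn_mul_shift (hf : IntegrableOn f (Ioi 0)) (hV : Continuous V)
    (hVub : BddAbove (range V)) (hVlb : ∀ r, BddBelow (V '' Ici r)) (a : ℝ) :
    IntegrableOn (fun x => f x * V (a + x)) (Ioi 0) := by
  obtain ⟨K, hK⟩ := exists_norm_le_on_Ici hVub (hVlb a)
  exact hf.mul_bdd (hV.comp (continuous_const_add a)).aestronglyMeasurable
    (ae_restrict_of_forall_mem measurableSet_Ioi fun x hx =>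
      hK _ (le_add_of_nonneg_right (mem_Ioi.1 hx).le))

theorem continuous_shiftedMean (hf : IntegrableOn f (Ioi 0)) (hV : Continuous V)
    (hVub : BddAbove (range V)) (hVlb : ∀ r, BddBelow (V '' Ici r)) :
    Continuous (shiftedMean f V) := by
  refine continuous_iff_continuousAt.2 fun a₀ => ?_
  obtain ⟨K, hK⟩ := exists_norm_le_on_Ici hVub (hVlb (a₀ - 1))
  refine continuousAt_of_dominated (bound := fun x => ‖f x‖ * K) ?_ ?_ (hf.norm.mul_const K) ?_
  · exact Eventually.of_forall fun a =>
      hf.aestronglyMeasurable.mul (hV.comp (continuous_const_add a)).aestronglyMeasurable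
  · filter_upwards [Ioi_mem_nhds (sub_one_lt a₀)] with a ha
    refine ae_restrict_of_forall_mem measurableSet_Ioi fun x hx => ?_
    rw [norm_mul]
    refine mul_le_mul_of_nonneg_left (hK _ (mem_Ici.2 ?_)) (norm_nonneg _)
    linarith [mem_Ioi.1 hx, mem_Ioi.1 ha]
  · exact ae_of_all _ fun x =>
      (continuous_const.mul (hV.comp (continuous_id.add continuous_const))).continuousAt

theorem shiftedMean_le_shiftedMean_add {u v C : ℝ} (hf : ∀ x, 0 ≤ f x)
    (hf1 : ∫ x in Ioi (0 : ℝ), f x = 1)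
    (hint : ∀ a, IntegrableOn (fun x => f x * V (a + x)) (Ioi 0))
    (h : ∀ x > 0, V (u + x) ≤ V (v + x) + C) : shiftedMean f V u ≤ shiftedMean f V v + C :=
  integral_mul_le_integral_mul_add (ae_of_all _ hf) hf1 (hint u) (hint v)
    (ae_restrict_of_forall_mem measurableSet_Ioi h)

theorem shiftedMean_le {C : ℝ} (hf : ∀ x, 0 ≤ f x) (hf1 : ∫ x in Ioi (0 : ℝ), f x = 1)
    (hint : ∀ a, IntegrableOn (fun x => f x * V (a + x)) (Ioi 0)) (h : ∀ t, V t ≤ C) (a : ℝ) :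
    shiftedMean f V a ≤ C := by
  simpa [shiftedMean] using integral_mul_le_integral_mul_add (g₁ := fun x => V (a + x))
    (g₂ := fun _ => 0) (ae_of_all _ hf) hf1 (hint a) (by simp)
    (ae_restrict_of_forall_mem measurableSet_Ioi fun x _ => by simpa using h (a + x))

theorem antitoneOn_shiftedMean {r : ℝ} (hf : ∀ x, 0 ≤ f x) (hf1 : ∫ x in Ioi (0 : ℝ), f x = 1)
    (hint : ∀ a, IntegrableOn (fun x => f x * V (a + x)) (Ioi 0)) (hV : AntitoneOn V (Ici r)) :
    AntitoneOn (shiftedMean f V) (Ici r) := fun u hu v _ huv => by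
  have hu' := mem_Ici.1 hu
  simpa using shiftedMean_le_shiftedMean_add (C := 0) hf hf1 hint fun x hx => by
    simpa using hV (mem_Ici.2 (by linarith)) (mem_Ici.2 (by linarith)) (by linarith)

end ShiftedMean

def mergeValue (G : ℝ → ℝ) (γ : ℝ) (f V : ℝ → ℝ) (s : ℝ) : ℝ := G s + γ * shiftedMean f V s

/-- `Q_V(s, a)` for a non-merging action `a`; it does not depend on the state `s`. -/
def nonMergeValue (G : ℝ → ℝ) (γ : ℝ) (f V : ℝ → ℝ) (a : ℝ) : ℝ :=
  G a - G 0 + γ * shiftedMean f V a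

def supNonMergeValue (G : ℝ → ℝ) (t₀ γ : ℝ) (f V : ℝ → ℝ) : ℝ :=
  sSup (nonMergeValue G γ f V '' Iio t₀)

def IsBellmanFixedPoint (G : ℝ → ℝ) (t₀ γ : ℝ) (f V : ℝ → ℝ) : Prop :=
  ∀ s, V s = if s < t₀
    then max (mergeValue G γ f V s) (sSup (nonMergeValue G γ f V '' {a | a < s ∧ a < t₀}))
    else supNonMergeValue G t₀ γ f V

section Bellman

variable {G f V : ℝ → ℝ} {t₀ γ : ℝ}

theorem mergeValue_eq_nonMergeValue_add (s : ℝ) :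
    mergeValue G γ f V s = nonMergeValue G γ f V s + G 0 := by
  unfold mergeValue nonMergeValue
  ring

theorem bddAbove_nonMergeValue {cN C : ℝ} (hGinc : MonotoneOn G (Iic cN))
    (hGdec : AntitoneOn G (Ico cN t₀)) (hγ : 0 ≤ γ) (hW : ∀ a, shiftedMean f V a ≤ C) :
    BddAbove (nonMergeValue G γ f V '' Iio t₀) := by
  refine ⟨G cN - G 0 + γ * C, ?_⟩
  rintro _ ⟨a, ha, rfl⟩
  have hGa := apply_le_of_monotoneOn_of_antitoneOn hGinc hGdec ha
  have hWa := mul_le_mul_of_nonneg_left (hW a) hγ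
  unfold nonMergeValue
  linarith

theorem nonempty_lt_and_lt (s t : ℝ) : {a : ℝ | a < s ∧ a < t}.Nonempty :=
  nonempty_Iio.mono fun _ ha => lt_min_iff.1 ha

theorem sSup_nonMergeValue_le_sup (hR : BddAbove (nonMergeValue G γ f V '' Iio t₀)) (s : ℝ) :
    sSup (nonMergeValue G γ f V '' {a | a < s ∧ a < t₀}) ≤ supNonMergeValue G t₀ γ f V :=
  csSup_le_csSup hR ((nonempty_lt_and_lt s t₀).image _) (image_mono fun _ ha => ha.2)

namespace IsBellmanFixedPoint

theorem eq_sup_of_le (hV : IsBellmanFixedPoint G t₀ γ f V) {s : ℝ} (hs : t₀ ≤ s) :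
    V s = supNonMergeValue G t₀ γ f V := by
  rw [hV s, if_neg (not_lt.2 hs)]

theorem eq_max (hV : IsBellmanFixedPoint G t₀ γ f V) {s : ℝ} (hs : s < t₀) :
    V s = max (mergeValue G γ f V s) (sSup (nonMergeValue G γ f V '' {a | a < s ∧ a < t₀})) := by
  rw [hV s, if_pos hs]

theorem sSup_nonMergeValue_le (hV : IsBellmanFixedPoint G t₀ γ f V) {s : ℝ} (hs : s < t₀) :
    sSup (nonMergeValue G γ f V '' {a | a < s ∧ a < t₀}) ≤ V s := by
  rw [hV.eq_max hs]
  exact le_max_right _ _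

theorem le_sup_add (hV : IsBellmanFixedPoint G t₀ γ f V)
    (hR : BddAbove (nonMergeValue G γ f V '' Iio t₀)) (hG0 : 0 ≤ G 0) (s : ℝ) :
    V s ≤ supNonMergeValue G t₀ γ f V + G 0 := by
  rcases lt_or_ge s t₀ with hs | hs
  · rw [hV.eq_max hs, mergeValue_eq_nonMergeValue_add]
    exact max_le (add_le_add_left (le_csSup hR (mem_image_of_mem _ hs)) _)
      ((sSup_nonMergeValue_le_sup hR s).trans (le_add_of_nonneg_right hG0))
  · rw [hV.eq_sup_of_le hs]
    exact le_add_of_nonneg_right hG0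

/-- From `v`, the non-merging action `u` costs only `G 0` more than merging at `u`, and every
non-merging action available from `u` is available from `v`. -/
theorem le_add_of_le (hV : IsBellmanFixedPoint G t₀ γ f V)
    (hR : BddAbove (nonMergeValue G γ f V '' Iio t₀)) (hG0 : 0 ≤ G 0) {u v : ℝ} (huv : u ≤ v) :
    V u ≤ V v + G 0 := by
  rcases le_or_gt t₀ v with hv | hv
  · rw [hV.eq_sup_of_le hv]
    exact hV.le_sup_add hR hG0 u
  rcases huv.eq_or_lt with rfl | huv
  · exact le_add_of_nonneg_right hG0
  have hRv : BddAbove (nonMergeValue G γ f V '' {a | a < v ∧ a < t₀}) :=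
    hR.mono (image_mono fun _ ha => ha.2)
  have hSv := hV.sSup_nonMergeValue_le hv
  rw [hV.eq_max (huv.trans hv), mergeValue_eq_nonMergeValue_add]
  refine max_le (add_le_add_left ((le_csSup hRv ⟨u, ⟨huv, huv.trans hv⟩, rfl⟩).trans hSv) _) ?_
  calc sSup (nonMergeValue G γ f V '' {a | a < u ∧ a < t₀})
      ≤ sSup (nonMergeValue G γ f V '' {a | a < v ∧ a < t₀}) :=
        csSup_le_csSup hRv ((nonempty_lt_and_lt u t₀).image _)
          (image_mono fun _ ha => ⟨ha.1.trans huv, ha.2⟩)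
    _ ≤ V v + G 0 := hSv.trans (le_add_of_nonneg_right hG0)

end IsBellmanFixedPoint

variable {cN : ℝ}

theorem continuousOn_mergeValue {s : Set ℝ} (hGcont : ContinuousOn G s)
    (hWcont : Continuous (shiftedMean f V)) : ContinuousOn (mergeValue G γ f V) s :=
  hGcont.add (continuous_const.mul hWcont).continuousOn

theorem continuousOn_nonMergeValue {s : Set ℝ} (hGcont : ContinuousOn G s)
    (hWcont : Continuous (shiftedMean f V)) : ContinuousOn (nonMergeValue G γ f V) s :=
  (hGcont.sub continuousOn_const).add (continuous_const.mul hWcont).continuousOn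

theorem antitoneOn_mergeValue (hGdec : AntitoneOn G (Ico cN t₀))
    (hWanti : AntitoneOn (shiftedMean f V) (Ici cN)) (hγ : 0 ≤ γ) :
    AntitoneOn (mergeValue G γ f V) (Ico cN t₀) := fun _ ha _ hb hab =>
  add_le_add (hGdec ha hb hab) (mul_le_mul_of_nonneg_left (hWanti ha.1 hb.1 hab) hγ)

theorem nonMergeValue_le_mergeValue (hGinc : MonotoneOn G (Iic cN)) (hγ : γ ∈ Icc (0 : ℝ) 1)
    (hG0 : 0 ≤ G 0)
    (hWadd : ∀ u v, u ≤ v → shiftedMean f V u ≤ shiftedMean f V v + G 0) {a s : ℝ}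
    (has : a ≤ s) (hs : s ≤ cN) : nonMergeValue G γ f V a ≤ mergeValue G γ f V s := by
  have hGa : G a ≤ G s := hGinc (mem_Iic.2 (has.trans hs)) (mem_Iic.2 hs) has
  have hWa := mul_le_mul_of_nonneg_left (hWadd a s has) hγ.1
  have hγG0 : γ * G 0 ≤ G 0 := mul_le_of_le_one_left hG0 hγ.2
  unfold nonMergeValue mergeValue
  linarith

theorem nonMergeValue_le_nonMergeValue_of_le {θ' a : ℝ} (hGinc : MonotoneOn G (Iic cN))
    (hθ' : θ' ≤ cN) (hGθ' : G θ' = G cN - G 0) (hγ : γ ∈ Icc (0 : ℝ) 1) (hG0 : 0 ≤ G 0)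
    (hWadd : ∀ u v, u ≤ v → shiftedMean f V u ≤ shiftedMean f V v + G 0) (ha : a ≤ θ') :
    nonMergeValue G γ f V a ≤ nonMergeValue G γ f V cN := by
  have hGa : G a ≤ G θ' := hGinc (mem_Iic.2 (ha.trans hθ')) (mem_Iic.2 hθ') ha
  have hWa := mul_le_mul_of_nonneg_left (hWadd a cN (ha.trans hθ')) hγ.1
  have hγG0 : γ * G 0 ≤ G 0 := mul_le_of_le_one_left hG0 hγ.2
  unfold nonMergeValue
  linarith

theorem exists_isGreatest_nonMergeValue {θ' : ℝ} (hcN : cN < t₀) (hθ' : θ' ≤ cN)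
    (hGθ' : G θ' = G cN - G 0) (hGinc : MonotoneOn G (Iic cN)) (hGdec : AntitoneOn G (Ico cN t₀))
    (hGcont : ContinuousOn G (Iio t₀)) (hWcont : Continuous (shiftedMean f V))
    (hWadd : ∀ u v, u ≤ v → shiftedMean f V u ≤ shiftedMean f V v + G 0)
    (hWanti : AntitoneOn (shiftedMean f V) (Ici cN)) (hγ : γ ∈ Icc (0 : ℝ) 1) (hG0 : 0 ≤ G 0) :
    ∃ c ∈ Icc θ' cN, IsGreatest (nonMergeValue G γ f V '' Iio t₀) (nonMergeValue G γ f V c) := by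
  have hsub : Icc θ' cN ⊆ Iio t₀ := fun a ha => ha.2.trans_lt hcN
  refine exists_isGreatest_image_of_isCompact isCompact_Icc (nonempty_Icc.2 hθ') hsub
    ((continuousOn_nonMergeValue hGcont hWcont).mono hsub) fun a ha => ?_
  rcases lt_or_ge a θ' with hlt | hge
  · exact ⟨cN, right_mem_Icc.2 hθ',
      nonMergeValue_le_nonMergeValue_of_le hGinc hθ' hGθ' hγ hG0 hWadd hlt.le⟩
  rcases le_or_gt a cN with hle | hgt
  · exact ⟨a, ⟨hge, hle⟩, le_rfl⟩
  refine ⟨cN, right_mem_Icc.2 hθ', ?_⟩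
  have hQ := antitoneOn_mergeValue hGdec hWanti hγ.1 (left_mem_Ico.2 hcN) ⟨hgt.le, ha⟩ hgt.le
  rw [mergeValue_eq_nonMergeValue_add, mergeValue_eq_nonMergeValue_add] at hQ
  linarith

theorem exists_mergeValue_eq {θN c : ℝ} (hθN : θN ∈ Ioo cN t₀) (hGθN : G θN = G cN - G 0)
    (hcN : c ≤ cN) (hc : IsGreatest (nonMergeValue G γ f V '' Iio t₀) (nonMergeValue G γ f V c))
    (hGinc : MonotoneOn G (Iic cN)) (hGcont : ContinuousOn G (Iio t₀))
    (hWcont : Continuous (shiftedMean f V))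
    (hWadd : ∀ u v, u ≤ v → shiftedMean f V u ≤ shiftedMean f V v + G 0)
    (hWanti : AntitoneOn (shiftedMean f V) (Ici cN)) (hγ : γ ∈ Icc (0 : ℝ) 1) (hG0 : 0 ≤ G 0) :
    ∃ θ ∈ Icc cN θN, mergeValue G γ f V θ = nonMergeValue G γ f V c := by
  have hsub : Icc cN θN ⊆ Iio t₀ := fun a ha => ha.2.trans_lt hθN.2
  have hθN_le : mergeValue G γ f V θN ≤ nonMergeValue G γ f V cN := by
    have hW := mul_le_mul_of_nonneg_left (hWanti (mem_Ici.2 le_rfl) hθN.1.le hθN.1.le) hγ.1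
    unfold mergeValue nonMergeValue
    linarith
  have hcN_le := hc.2 (mem_image_of_mem _ (hθN.1.trans hθN.2))
  exact intermediate_value_Icc' hθN.1.le ((continuousOn_mergeValue hGcont hWcont).mono hsub)
    ⟨hθN_le.trans hcN_le, nonMergeValue_le_mergeValue hGinc hγ hG0 hWadd hcN le_rfl⟩

namespace IsBellmanFixedPoint

theorem eq_mergeValue_of_le (hV : IsBellmanFixedPoint G t₀ γ f V)
    (hR : BddAbove (nonMergeValue G γ f V '' Iio t₀)) {θ s : ℝ} (hθ : cN ≤ θ) (hθt₀ : θ < t₀)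
    (hQθ : mergeValue G γ f V θ = supNonMergeValue G t₀ γ f V) (hGinc : MonotoneOn G (Iic cN))
    (hGdec : AntitoneOn G (Ico cN t₀))
    (hWadd : ∀ u v, u ≤ v → shiftedMean f V u ≤ shiftedMean f V v + G 0)
    (hWanti : AntitoneOn (shiftedMean f V) (Ici cN)) (hγ : γ ∈ Icc (0 : ℝ) 1) (hG0 : 0 ≤ G 0)
    (hs : s ≤ θ) : V s = mergeValue G γ f V s := by
  have hst₀ : s < t₀ := hs.trans_lt hθt₀
  rw [hV.eq_max hst₀]
  refine max_eq_left ?_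
  rcases le_or_gt s cN with hle | hgt
  · refine csSup_le ((nonempty_lt_and_lt s t₀).image _) ?_
    rintro _ ⟨a, ha, rfl⟩
    exact nonMergeValue_le_mergeValue hGinc hγ hG0 hWadd ha.1.le hle
  · calc sSup (nonMergeValue G γ f V '' {a | a < s ∧ a < t₀})
        ≤ supNonMergeValue G t₀ γ f V := sSup_nonMergeValue_le_sup hR s
      _ = mergeValue G γ f V θ := hQθ.symm
      _ ≤ mergeValue G γ f V s :=
        antitoneOn_mergeValue hGdec hWanti hγ.1 ⟨hgt.le, hst₀⟩ ⟨hθ, hθt₀⟩ hs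

theorem eq_sup_of_lt (hV : IsBellmanFixedPoint G t₀ γ f V)
    (hR : BddAbove (nonMergeValue G γ f V '' Iio t₀)) {θ c s : ℝ} (hθ : cN ≤ θ)
    (hQθ : mergeValue G γ f V θ = supNonMergeValue G t₀ γ f V) (hcθ : c ≤ θ)
    (hcZ : nonMergeValue G γ f V c = supNonMergeValue G t₀ γ f V)
    (hGdec : AntitoneOn G (Ico cN t₀)) (hWanti : AntitoneOn (shiftedMean f V) (Ici cN))
    (hγ : 0 ≤ γ) (hs : θ < s) : V s = supNonMergeValue G t₀ γ f V := by
  rcases le_or_gt t₀ s with hst₀ | hst₀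
  · exact hV.eq_sup_of_le hst₀
  have hQs : mergeValue G γ f V s ≤ supNonMergeValue G t₀ γ f V :=
    hQθ ▸ antitoneOn_mergeValue hGdec hWanti hγ ⟨hθ, hs.trans hst₀⟩ ⟨hθ.trans hs.le, hst₀⟩ hs.le
  have hcs : c < s := hcθ.trans_lt hs
  have hsup : sSup (nonMergeValue G γ f V '' {a | a < s ∧ a < t₀}) =
      supNonMergeValue G t₀ γ f V :=
    (sSup_nonMergeValue_le_sup hR s).antisymm (hcZ ▸ le_csSup
      (hR.mono (image_mono fun _ ha => ha.2)) ⟨c, ⟨hcs, hcs.trans hst₀⟩, rfl⟩)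
  rw [hV.eq_max hst₀, hsup, max_eq_right hQs]

end IsBellmanFixedPoint

end Bellman

end

theorem stmt_16_general
    (cN t₀ : ℝ) (G : ℝ → ℝ)
    (hGcont : ContinuousOn G (Iio t₀))
    (hGinc : StrictMonoOn G (Iic cN))
    (hGdec : StrictAntiOn G (Ico cN t₀))
    (hG0 : 0 < G 0)
    (θN : ℝ) (hθN : θN ∈ Ioo cN t₀) (hGθN : G θN = G cN - G 0)
    (θN' : ℝ) (hθN' : θN' < cN) (hGθN' : G θN' = G cN - G 0)
    (f : ℝ → ℝ) (γ : ℝ)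
    (hfnn : ∀ x, 0 ≤ f x)
    (hf1 : (∫ x in Ioi (0:ℝ), f x) = 1) (hγ : γ ∈ Ioo (0:ℝ) 1)
    (V : ℝ → ℝ)
    (hVub : BddAbove (range V))
    (hVlb : ∀ r : ℝ, BddBelow (V '' Ici r))
    (hfix : ∀ s, V s = if s < t₀
      then max (G s + γ * ∫ x in Ioi (0:ℝ), f x * V (s + x))
        (sSup ((fun a => (G a - G 0) + γ * ∫ x in Ioi (0:ℝ), f x * V (a + x)) ''
          {a | a < s ∧ a < t₀}))
      else sSup ((fun a => (G a - G 0) + γ * ∫ x in Ioi (0:ℝ), f x * V (a + x)) '' Iio t₀))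
    (hVcont : Continuous V)
    (hVanti : AntitoneOn V (Ici cN)) :
    ∃ θ ∈ Icc cN θN, ∃ c ∈ Icc θN' cN,
      (∀ s, s ≤ θ → V s = G s + γ * ∫ x in Ioi (0:ℝ), f x * V (s + x)) ∧
      (∀ s, θ < s → V s = (G c - G 0) + γ * ∫ x in Ioi (0:ℝ), f x * V (c + x)) ∧
      (∀ s, θ < s → V s = V θ) := by
  have hV : IsBellmanFixedPoint G t₀ γ f V := hfix
  have hγ' : γ ∈ Icc (0 : ℝ) 1 := Ioo_subset_Icc_self hγ
  have hfi : IntegrableOn f (Ioi 0) :=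
    Integrable.of_integral_ne_zero (by rw [hf1]; exact one_ne_zero)
  have hint := integrableOn_mul_shift hfi hVcont hVub hVlb
  have hWcont := continuous_shiftedMean hfi hVcont hVub hVlb
  have hWanti := antitoneOn_shiftedMean hfnn hf1 hint hVanti
  obtain ⟨U, hU⟩ := hVub
  have hR := bddAbove_nonMergeValue hGinc.monotoneOn hGdec.antitoneOn hγ'.1
    (shiftedMean_le hfnn hf1 hint fun t => hU ⟨t, rfl⟩)
  have hWadd : ∀ u v, u ≤ v → shiftedMean f V u ≤ shiftedMean f V v + G 0 := fun u v huv =>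
    shiftedMean_le_shiftedMean_add hfnn hf1 hint fun x _ =>
      hV.le_add_of_le hR hG0.le (add_le_add_left huv x)
  obtain ⟨c, hc, hcmax⟩ := exists_isGreatest_nonMergeValue (hθN.1.trans hθN.2) hθN'.le hGθN'
    hGinc.monotoneOn hGdec.antitoneOn hGcont hWcont hWadd hWanti hγ' hG0.le
  have hZ : supNonMergeValue G t₀ γ f V = nonMergeValue G γ f V c := hcmax.csSup_eq
  obtain ⟨θ, hθ, hQθ⟩ := exists_mergeValue_eq hθN hGθN hc.2 hcmax hGinc.monotoneOn hGcont hWcont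
    hWadd hWanti hγ' hG0.le
  have hmerge : ∀ s ≤ θ, V s = mergeValue G γ f V s := fun s hs =>
    hV.eq_mergeValue_of_le hR hθ.1 (hθ.2.trans_lt hθN.2) (hQθ.trans hZ.symm) hGinc.monotoneOn
      hGdec.antitoneOn hWadd hWanti hγ' hG0.le hs
  have hskip : ∀ s, θ < s → V s = supNonMergeValue G t₀ γ f V := fun s hs =>
    hV.eq_sup_of_lt hR hθ.1 (hQθ.trans hZ.symm) (hc.2.trans hθ.1) hZ.symm hGdec.antitoneOn
      hWanti hγ'.1 hs
  refine ⟨θ, hθ, c, hc, hmerge, fun s hs => (hskip s hs).trans hZ, fun s hs => ?_⟩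
  rw [hskip s hs, hmerge θ le_rfl, hQθ, hZ]

theorem stmt_16
    (cN t₀ : ℝ) (G : ℝ → ℝ)
    (hcN : cN < 0) (ht₀ : 0 < t₀)
    (hGcont : ContinuousOn G (Iio t₀))
    (hGinc : StrictMonoOn G (Iic cN))
    (hGdec : StrictAntiOn G (Ico cN t₀))
    (hGtop : Tendsto G (nhdsWithin t₀ (Iio t₀)) atBot)
    (hGbot : Tendsto G atBot atBot)
    (hG0 : 0 < G 0)
    (θN : ℝ) (hθN : θN ∈ Ioo cN t₀) (hGθN : G θN = G cN - G 0)
    (θN' : ℝ) (hθN' : θN' < cN) (hGθN' : G θN' = G cN - G 0)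
    (f : ℝ → ℝ) (γ : ℝ)
    (hfm : Measurable f) (hf0 : ∀ x ≤ 0, f x = 0) (hfnn : ∀ x, 0 ≤ f x)
    (hf1 : (∫ x in Ioi (0:ℝ), f x) = 1) (hγ : γ ∈ Ioo (0:ℝ) 1)
    (hfpos : ∀ᵐ x ∂volume, 0 < x → 0 < f x)
    (V : ℝ → ℝ) (hVm : Measurable V)
    (hVub : BddAbove (range V))
    (hVlb : ∀ r : ℝ, BddBelow (V '' Ici r))
    (hfix : ∀ s, V s = if s < t₀
      then max (G s + γ * ∫ x in Ioi (0:ℝ), f x * V (s + x))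
        (sSup ((fun a => (G a - G 0) + γ * ∫ x in Ioi (0:ℝ), f x * V (a + x)) ''
          {a | a < s ∧ a < t₀}))
      else sSup ((fun a => (G a - G 0) + γ * ∫ x in Ioi (0:ℝ), f x * V (a + x)) '' Iio t₀))
    (hVcont : Continuous V)
    (hVanti : AntitoneOn V (Ici cN)) :
    ∃ θ ∈ Icc cN θN, ∃ c ∈ Icc θN' cN,
      (∀ s, s ≤ θ → V s = G s + γ * ∫ x in Ioi (0:ℝ), f x * V (s + x)) ∧
      (∀ s, θ < s → V s = (G c - G 0) + γ * ∫ x in Ioi (0:ℝ), f x * V (c + x)) ∧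
      (∀ s, θ < s → V s = V θ) :=
  stmt_16_general cN t₀ G hGcont hGinc hGdec hG0 θN hθN hGθN θN' hθN' hGθN' f γ hfnn hf1 hγ V hVub
    hVlb hfix hVcont hVanti
end
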